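/- arXiv:1808.01152 — 2 statements merged into one kernel-verified Lean document; each statement's English description precedes it below -/
import Mathlib

section
/- Let d ≥ 1, let Γ be a nonempty set of proper 4-colorings of Q_d, let f be uniformly distributed on Γ, and let u be any vertex with neighborhood N_u. Then T_Γ(u) := (1/d)·H(f_{N_u}) + H(f_u | f(N_u)) ≤ 2 + 4/d. -/
open Finset

abbrev V (d : ℕ) : Type := Fin d → Bool

def cube (d : ℕ) : SimpleGraph (V d) where
  Adj u v := (Finset.univ.filter fun i => u i ≠ v i).card = 1
  symm := by
    constructor
    intro u v h
    have e : (Finset.univ.filter fun i => v i ≠ u i) = (Finset.univ.filter fun i => u i ≠ v i) := by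
      apply Finset.filter_congr
      intro i _
      exact ne_comm
    rw [e]
    exact h
  loopless := by
    constructor
    intro u h
    simp at h

instance cubeAdjDecidable (d : ℕ) : DecidableRel (cube d).Adj := fun u v =>
  decidable_of_iff ((Finset.univ.filter fun i => u i ≠ v i).card = 1) Iff.rfl

/-- a vertex of the hypercube is even if it has an even number of `true` coordinates. -/
def isEven {d : ℕ} (v : V d) : Prop := Even (Finset.univ.filter fun i => v i = true).card

/-- `f` is a proper `q`-coloring of the `d`-dimensional hypercube. -/
def IsColoring (d q : ℕ) (f : V d → Fin q) : Prop :=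
  ∀ u v : V d, (cube d).Adj u v → f u ≠ f v

open scoped Classical in
/-- The probability that the random variable `X` (on the finite probability space `(Ω, p)`)
takes the value `t`. -/
noncomputable def pr {Ω T : Type*} [Fintype Ω] (p : Ω → ℝ) (X : Ω → T) (t : T) : ℝ :=
  ∑ ω : Ω, if X ω = t then p ω else 0

/-- The binary (Shannon) entropy `H(X) = ∑_t P(X = t) log₂ (1 / P(X = t))`. -/
noncomputable def ent {Ω T : Type*} [Fintype Ω] [Fintype T] (p : Ω → ℝ) (X : Ω → T) : ℝ :=
  ∑ t : T, pr p X t * Real.logb 2 (pr p X t)⁻¹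

/-- The conditional entropy
`H(X | Y) = ∑_u P(Y = u) ∑_t P(X = t | Y = u) log₂ (1 / P(X = t | Y = u))`. -/
noncomputable def condEnt {Ω T U : Type*} [Fintype Ω] [Fintype T] [Fintype U]
    (p : Ω → ℝ) (X : Ω → T) (Y : Ω → U) : ℝ :=
  ∑ u : U, pr p Y u *
    ∑ t : T, (pr p (fun ω => (X ω, Y ω)) (t, u) / pr p Y u) *
      Real.logb 2 ((pr p (fun ω => (X ω, Y ω)) (t, u) / pr p Y u))⁻¹

/-- `T_p(u) = (1/d) H(f_{N_u}) + H(f_u | f(N_u))`, where `f` is a random coloring with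
distribution `p`, `f_{N_u}` is the restriction of `f` to the neighborhood of `u`, and
`f(N_u)` is the set of colors appearing on the neighborhood of `u`. -/
noncomputable def Tp (d : ℕ) (p : (V d → Fin 4) → ℝ) (u : V d) : ℝ :=
  (1 / (d : ℝ)) * ent p (fun f => fun v : {v : V d // (cube d).Adj u v} => f v.1) +
    condEnt p (fun f => f u)
      (fun f => Finset.image (fun v : {v : V d // (cube d).Adj u v} => f v.1) Finset.univ)

/-- The uniform distribution on the finite set `Γ` of colorings. -/
noncomputable def unif (d : ℕ) (Γ : Finset (V d → Fin 4)) : (V d → Fin 4) → ℝ :=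
  fun f => if f ∈ Γ then ((Γ.card : ℝ))⁻¹ else 0

/-!
Write `S = f(N_u)`. By the chain rule, `H(f_{N_u}) = H(S) + H(f_{N_u} | S)`; here `H(S) ≤ 4`
since `S` ranges over the `2⁴` subsets of the colors, and given `S` the restriction `f_{N_u}`
lies in `S^{N_u}`, so `H(f_{N_u} | S) ≤ d · E log₂ |S|`. Since `f` is proper, `f_u ∉ S`, whence
`H(f_u | S) ≤ E log₂ (4 - |S|)`. Finally `log₂ a + log₂ b ≤ 2` whenever `a + b = 4` (AM–GM).
-/

open Real

section FiniteEntropy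

variable {Ω T U : Type*} [Fintype Ω] {p : Ω → ℝ}

lemma pr_nonneg (hp : ∀ ω, 0 ≤ p ω) (X : Ω → T) (t : T) : 0 ≤ pr p X t :=
  Finset.sum_nonneg fun ω _ => by split_ifs <;> simp [hp ω]

lemma sum_pr [Fintype T] (X : Ω → T) : ∑ t, pr p X t = ∑ ω, p ω := by
  classical
  unfold pr
  rw [Finset.sum_comm]
  simp

lemma sum_pr_pair [Fintype T] (X : Ω → T) (Y : Ω → U) (u : U) :
    ∑ t, pr p (fun ω => (X ω, Y ω)) (t, u) = pr p Y u := by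
  classical
  unfold pr
  rw [Finset.sum_comm]
  refine Finset.sum_congr rfl fun ω _ => ?_
  by_cases h : Y ω = u <;> simp [h]

lemma exists_of_pr_ne_zero {X : Ω → T} {t : T} (h : pr p X t ≠ 0) :
    ∃ ω, p ω ≠ 0 ∧ X ω = t := by
  contrapose! h
  refine Finset.sum_eq_zero fun ω _ => ?_
  by_cases hp : p ω = 0
  · simp [hp]
  · simp [h ω hp]

lemma pr_comp_of_injective {φ : T → U} (hφ : φ.Injective) (X : Ω → T) (t : T) :
    pr p (fun ω => φ (X ω)) (φ t) = pr p X t := by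
  classical
  simp only [pr, hφ.eq_iff]

lemma pr_eq_zero_of_notMem_range {X : Ω → T} {t : T} (ht : t ∉ Set.range X) : pr p X t = 0 :=
  Finset.sum_eq_zero fun ω _ => if_neg fun h => ht ⟨ω, h⟩

lemma mul_logb_inv_eq_negMulLog_div (x : ℝ) : x * logb 2 x⁻¹ = negMulLog x / log 2 := by
  rw [logb, log_inv, negMulLog]
  ring

lemma ent_eq_sum_negMulLog_div [Fintype T] (X : Ω → T) :
    ent p X = ∑ t, negMulLog (pr p X t) / log 2 := by
  simp only [ent, mul_logb_inv_eq_negMulLog_div]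

lemma ent_comp_of_injective [Fintype T] [Fintype U] {φ : T → U} (hφ : φ.Injective) (X : Ω → T) :
    ent p (fun ω => φ (X ω)) = ent p X := by
  rw [ent_eq_sum_negMulLog_div, ent_eq_sum_negMulLog_div]
  refine (Fintype.sum_of_injective φ hφ _ _ (fun s hs => ?_) fun t => ?_).symm
  · rw [pr_eq_zero_of_notMem_range, negMulLog_zero, zero_div]
    rintro ⟨ω, rfl⟩
    exact hs ⟨X ω, rfl⟩
  · rw [pr_comp_of_injective hφ]

lemma sum_negMulLog_eq_negMulLog_sum_add [Fintype T] {q : T → ℝ} (hq : ∀ t, 0 ≤ q t) :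
    ∑ t, negMulLog (q t) =
      negMulLog (∑ t, q t) + (∑ t, q t) * ∑ t, negMulLog (q t / ∑ t, q t) := by
  set r := ∑ t, q t
  by_cases hr0 : r = 0
  · have hzero : ∀ t, q t = 0 := fun t =>
      (Finset.sum_eq_zero_iff_of_nonneg fun t _ => hq t).mp hr0 t (Finset.mem_univ t)
    simp [hzero, hr0]
  · calc ∑ t, negMulLog (q t) = ∑ t, negMulLog (r * (q t / r)) := by
          simp only [mul_div_cancel₀ _ hr0]
      _ = (∑ t, q t / r) * negMulLog r + r * ∑ t, negMulLog (q t / r) := by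
          simp only [negMulLog_mul, Finset.sum_add_distrib, Finset.sum_mul, Finset.mul_sum]
      _ = negMulLog r + r * ∑ t, negMulLog (q t / r) := by
          rw [← Finset.sum_div, div_self hr0, one_mul]

lemma ent_pair_eq_ent_add_condEnt [Fintype T] [Fintype U] (hp : ∀ ω, 0 ≤ p ω) (X : Ω → T)
    (Y : Ω → U) :
    ent p (fun ω => (X ω, Y ω)) = ent p Y + condEnt p X Y := by
  rw [ent_eq_sum_negMulLog_div, ent_eq_sum_negMulLog_div, condEnt, Fintype.sum_prod_type_right,
    ← Finset.sum_add_distrib]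
  refine Finset.sum_congr rfl fun u _ => ?_
  rw [← Finset.sum_div, sum_negMulLog_eq_negMulLog_sum_add fun t => pr_nonneg hp _ _,
    sum_pr_pair]
  simp only [mul_logb_inv_eq_negMulLog_div, ← Finset.sum_div]
  ring

lemma ent_eq_ent_comp_add_condEnt [Fintype T] [Fintype U] (hp : ∀ ω, 0 ≤ p ω) (X : Ω → T)
    (g : T → U) :
    ent p X = ent p (fun ω => g (X ω)) + condEnt p X (fun ω => g (X ω)) := by
  rw [← ent_pair_eq_ent_add_condEnt hp,
    ent_comp_of_injective (φ := fun t => (t, g t)) fun t t' h => congrArg Prod.fst h]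

lemma sum_negMulLog_le_log_card {s : Finset T} {q : T → ℝ} (hq : ∀ t ∈ s, 0 ≤ q t)
    (hsum : ∑ t ∈ s, q t = 1) : ∑ t ∈ s, negMulLog (q t) ≤ log s.card := by
  have hs : (0 : ℝ) < s.card := by
    rcases s.eq_empty_or_nonempty with rfl | hne
    · simp at hsum
    · exact_mod_cast hne.card_pos
  have jensen := concaveOn_negMulLog.le_map_sum (t := s) (w := fun _ => (s.card : ℝ)⁻¹)
    (p := q) (fun _ _ => by positivity) (by simp [hs.ne']) fun t ht => hq t ht
  simp only [smul_eq_mul, ← Finset.mul_sum, hsum, mul_one] at jensen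
  rw [negMulLog, log_inv] at jensen
  have := mul_le_mul_of_nonneg_left jensen hs.le
  field_simp at this
  linarith

lemma sum_mul_logb_inv_le_logb_card [Fintype T] {q : T → ℝ} (hq : ∀ t, 0 ≤ q t)
    (hsum : ∑ t, q t = 1) (A : Finset T) (hA : ∀ t, q t ≠ 0 → t ∈ A) :
    ∑ t, q t * logb 2 (q t)⁻¹ ≤ logb 2 A.card := by
  have hzero : ∀ t ∉ A, q t = 0 := fun t ht => by_contra fun h => ht (hA t h)
  have hsumA : ∑ t ∈ A, q t = 1 := by
    rw [← hsum, Finset.sum_subset (Finset.subset_univ A) fun t _ ht => hzero t ht]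
  rw [← Finset.sum_subset (Finset.subset_univ A) fun t _ ht => by rw [hzero t ht, zero_mul]]
  simp only [mul_logb_inv_eq_negMulLog_div, ← Finset.sum_div]
  exact div_le_div_of_nonneg_right (sum_negMulLog_le_log_card (fun t _ => hq t) hsumA)
    (log_nonneg one_le_two)

lemma ent_le_logb_card [Fintype T] (hp : ∀ ω, 0 ≤ p ω) (hsum : ∑ ω, p ω = 1) (X : Ω → T) :
    ent p X ≤ logb 2 (Fintype.card T) :=
  sum_mul_logb_inv_le_logb_card (pr_nonneg hp X) (by rw [sum_pr, hsum]) Finset.univ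
    fun t _ => Finset.mem_univ t

lemma condEnt_le_sum_logb_card [Fintype T] [Fintype U] (hp : ∀ ω, 0 ≤ p ω) {X : Ω → T}
    {Y : Ω → U} (A : U → Finset T) (hA : ∀ ω, p ω ≠ 0 → X ω ∈ A (Y ω)) :
    condEnt p X Y ≤ ∑ u, pr p Y u * logb 2 (A u).card := by
  refine Finset.sum_le_sum fun u _ => ?_
  rcases (pr_nonneg hp Y u).eq_or_lt with h0 | hpos
  · simp [← h0]
  refine mul_le_mul_of_nonneg_left (sum_mul_logb_inv_le_logb_card
    (fun t => div_nonneg (pr_nonneg hp _ _) hpos.le) ?_ (A u) fun t ht => ?_) hpos.le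
  · rw [← Finset.sum_div, sum_pr_pair, div_self hpos.ne']
  · obtain ⟨ω, hω, hXY⟩ := exists_of_pr_ne_zero (div_ne_zero_iff.mp ht).1
    obtain ⟨rfl, rfl⟩ := Prod.mk.inj hXY
    exact hA ω hω

lemma ent_le_card_add_card_mul_sum_logb_card_image {ι α : Type*} [Fintype ι] [DecidableEq ι]
    [Fintype α] [DecidableEq α] (hp : ∀ ω, 0 ≤ p ω) (hsum : ∑ ω, p ω = 1) (X : Ω → ι → α) :
    ent p X ≤ Fintype.card α + Fintype.card ι *
      ∑ S, pr p (fun ω => Finset.univ.image (X ω)) S * logb 2 S.card := by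
  set Y := fun ω => Finset.univ.image (X ω)
  have hY : ent p Y ≤ Fintype.card α := by
    simpa [Fintype.card_finset, logb_pow] using ent_le_logb_card hp hsum Y
  have hXY : condEnt p X Y ≤ ∑ S, pr p Y S * logb 2 (Fintype.piFinset fun _ : ι => S).card :=
    condEnt_le_sum_logb_card hp _ fun ω _ =>
      Fintype.mem_piFinset.mpr fun i => Finset.mem_image_of_mem _ (Finset.mem_univ i)
  simp only [Fintype.card_piFinset, Finset.prod_const, Finset.card_univ, Nat.cast_pow,
    logb_pow] at hXY
  rw [ent_eq_ent_comp_add_condEnt hp X fun x => Finset.univ.image x, Finset.mul_sum]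
  simp only [mul_left_comm (Fintype.card ι : ℝ)]
  linarith

end FiniteEntropy

lemma eq_of_filter_ne_eq {ι : Type*} [Fintype ι] {u v w : ι → Bool}
    (h : Finset.univ.filter (fun j => u j ≠ v j) = Finset.univ.filter (fun j => u j ≠ w j)) :
    v = w := by
  funext j
  have hj := congrArg (j ∈ ·) h
  simp only [Finset.mem_filter, Finset.mem_univ, true_and, eq_iff_iff] at hj
  revert hj
  cases u j <;> cases v j <;> cases w j <;> simp

lemma card_adj_le (d : ℕ) (u : V d) : Fintype.card {v // (cube d).Adj u v} ≤ d := by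
  choose i hi using fun v : {v // (cube d).Adj u v} => Finset.card_eq_one.mp v.2
  simpa using Fintype.card_le_of_injective i fun v w h =>
    Subtype.ext (eq_of_filter_ne_eq ((hi v).trans (h ▸ hi w).symm))

lemma logb_two_add_logb_two_le_two {a b : ℝ} (ha : 0 ≤ a) (hb : 0 ≤ b) (hab : a + b ≤ 4) :
    logb 2 a + logb 2 b ≤ 2 := by
  have hlog4 : logb 2 4 = 2 := by
    rw [show (4 : ℝ) = 2 ^ 2 by norm_num, logb_pow, logb_self_eq_one one_lt_two]
    norm_num
  have hle : ∀ x : ℝ, 0 ≤ x → x ≤ 4 → logb 2 x ≤ 2 := fun x hx hx4 => by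
    rcases hx.eq_or_lt with rfl | hx
    · simp
    · exact (logb_le_logb_of_le one_lt_two hx hx4).trans_eq hlog4
  -- `logb 2 0 = 0`, so a vanishing side contributes nothing
  rcases ha.eq_or_lt with rfl | ha
  · simpa using hle b hb (by linarith)
  rcases hb.eq_or_lt with rfl | hb
  · simpa using hle a ha.le (by linarith)
  rw [← logb_mul ha.ne' hb.ne']
  exact hle _ (by positivity) (by nlinarith [sq_nonneg (a - b)])

lemma sum_pr_mul_logb_card_add_logb_card_compl_le {Ω : Type*} [Fintype Ω] {p : Ω → ℝ}
    (hp : ∀ ω, 0 ≤ p ω) (hsum : ∑ ω, p ω = 1) (Y : Ω → Finset (Fin 4)) :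
    ∑ S, pr p Y S * (logb 2 S.card + logb 2 Sᶜ.card) ≤ 2 := by
  have hcard : ∀ S : Finset (Fin 4), (S.card : ℝ) + Sᶜ.card = 4 := fun S => by
    exact_mod_cast (Finset.card_add_card_compl S).trans (Fintype.card_fin 4)
  calc ∑ S, pr p Y S * (logb 2 S.card + logb 2 Sᶜ.card) ≤ ∑ S, pr p Y S * 2 :=
        Finset.sum_le_sum fun S _ => mul_le_mul_of_nonneg_left
          (logb_two_add_logb_two_le_two (by positivity) (by positivity) (hcard S).le)
          (pr_nonneg hp Y S)
    _ = 2 := by rw [← Finset.sum_mul, sum_pr, hsum, one_mul]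

lemma unif_nonneg {d : ℕ} (Γ : Finset (V d → Fin 4)) (f : V d → Fin 4) : 0 ≤ unif d Γ f := by
  unfold unif
  split_ifs <;> positivity

lemma sum_unif {d : ℕ} {Γ : Finset (V d → Fin 4)} (hne : Γ.Nonempty) : ∑ f, unif d Γ f = 1 := by
  unfold unif
  rw [Finset.sum_ite_mem, Finset.univ_inter, Finset.sum_const, nsmul_eq_mul,
    mul_inv_cancel₀ (by exact_mod_cast hne.card_pos.ne')]

lemma mem_of_unif_ne_zero {d : ℕ} {Γ : Finset (V d → Fin 4)} {f : V d → Fin 4}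
    (h : unif d Γ f ≠ 0) : f ∈ Γ := by
  by_contra hf
  simp [unif, hf] at h

lemma condEnt_apply_le_sum_logb_card_compl {d : ℕ} {Γ : Finset (V d → Fin 4)}
    (hcol : ∀ f ∈ Γ, IsColoring d 4 f) (u : V d) :
    condEnt (unif d Γ) (fun f => f u)
        (fun f => Finset.univ.image fun v : {v // (cube d).Adj u v} => f v.1) ≤
      ∑ S, pr (unif d Γ) (fun f => Finset.univ.image fun v : {v // (cube d).Adj u v} => f v.1) S *
        logb 2 Sᶜ.card :=
  condEnt_le_sum_logb_card (unif_nonneg Γ) (fun S => Sᶜ) fun f hf => by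
    simp only [Finset.mem_compl, Finset.mem_image]
    rintro ⟨v, -, hv⟩
    exact hcol f (mem_of_unif_ne_zero hf) u v v.2 hv.symm

theorem T_le_two_general (d : ℕ) (Γ : Finset (V d → Fin 4)) (hne : Γ.Nonempty)
    (hcol : ∀ f ∈ Γ, IsColoring d 4 f) (u : V d) :
    Tp d (unif d Γ) u ≤ 2 + 4 / (d : ℝ) := by
  set p := unif d Γ
  set N := {v // (cube d).Adj u v}
  set Y : (V d → Fin 4) → Finset (Fin 4) := fun f => Finset.univ.image fun v : N => f v.1
  have hp : ∀ f, 0 ≤ p f := unif_nonneg Γ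
  have hsum : ∑ f, p f = 1 := sum_unif hne
  have hnbhd : ent p (fun f (v : N) => f v.1) ≤
      4 + Fintype.card N * ∑ S, pr p Y S * logb 2 S.card := by
    have := ent_le_card_add_card_mul_sum_logb_card_image hp hsum fun f (v : N) => f v.1
    rwa [Fintype.card_fin, Nat.cast_ofNat] at this
  have hratio : 1 / (d : ℝ) * Fintype.card N ≤ 1 := by
    rw [one_div_mul_eq_div]
    exact div_le_one_of_le₀ (by exact_mod_cast card_adj_le d u) d.cast_nonneg
  have hE : 0 ≤ ∑ S, pr p Y S * logb 2 S.card := Finset.sum_nonneg fun S _ =>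
    mul_nonneg (pr_nonneg hp Y S) (div_nonneg (log_natCast_nonneg _) (log_nonneg one_le_two))
  have hcompl := sum_pr_mul_logb_card_add_logb_card_compl_le hp hsum Y
  simp only [mul_add, Finset.sum_add_distrib] at hcompl
  calc Tp d p u ≤ 1 / d * (4 + Fintype.card N * ∑ S, pr p Y S * logb 2 S.card) +
        ∑ S, pr p Y S * logb 2 Sᶜ.card :=
        add_le_add (mul_le_mul_of_nonneg_left hnbhd (by positivity))
          (condEnt_apply_le_sum_logb_card_compl hcol u)
    _ ≤ 4 / d + ∑ S, pr p Y S * logb 2 S.card + ∑ S, pr p Y S * logb 2 Sᶜ.card := by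
        rw [mul_add, ← mul_assoc, one_div_mul_eq_div]
        gcongr
        exact mul_le_of_le_one_left hE hratio
    _ ≤ 2 + 4 / d := by linarith

/-- For `f` uniform on any nonempty set `Γ` of proper 4-colorings and any vertex `u`,
`T_Γ(u) = (1/d) H(f_{N_u}) + H(f_u | f(N_u)) ≤ 2 + 4/d`. -/
theorem T_le_two (d : ℕ) (hd : 1 ≤ d) (Γ : Finset (V d → Fin 4)) (hne : Γ.Nonempty)
    (hcol : ∀ f ∈ Γ, IsColoring d 4 f) (u : V d) :
    Tp d (unif d Γ) u ≤ 2 + 4 / (d : ℝ) :=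
  T_le_two_general d Γ hne hcol u
end

section
/- Let (C,D) be an ordered equipartition of {1,2,3,4} and let k ≥ 0. The number of proper 4-colorings f of Q_d whose set of bad vertices (vertices where f disagrees with (C,D)) has size exactly k and has any two of its elements at graph distance at least 3 is at most C(N,k)·2^{N-dk}, where N = 2^d. Consequently, summing over the six ordered equipartitions and all k, the total count is less than 6e·2^N. -/
open Finset

/-- `(C, D)` is an ordered equipartition of the color set `{1,2,3,4}` (here `Fin 4`). -/
def IsEquip (C D : Finset (Fin 4)) : Prop :=
  C.card = 2 ∧ D.card = 2 ∧ Disjoint C D ∧ C ∪ D = Finset.univ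

/-- The set of vertices at which `f` disagrees with the ordered equipartition `(C, D)`
(agreement at `v` means: `f v ∈ C ↔ v` is even); such vertices are called bad. -/
def badSet (d : ℕ) (f : V d → Fin 4) (C : Finset (Fin 4)) : Set (V d) :=
  {v | ¬ (f v ∈ C ↔ isEven v)}

/-- The number of proper 4-colorings of `Q_d` with exactly `k` bad vertices (w.r.t. the
phase `(C, D)`), any two of which are at graph distance at least 3. -/
noncomputable def idealCount (d : ℕ) (C : Finset (Fin 4)) (k : ℕ) : ℕ :=
  Nat.card {f : V d → Fin 4 // IsColoring d 4 f ∧ (badSet d f C).ncard = k ∧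
    (badSet d f C).Pairwise (fun u v => 3 ≤ (cube d).dist u v)}

/-!
Fix the bad set `B` of a colouring `f`, of size `k` and 3-separated. The parity of `v` and whether
`v ∈ B` dictate which part of `(C, D)` contains `f v`, so `f` is determined by one bit per vertex.
On the neighbourhood `N(B)` even that bit is forced: if `v ∈ N(B)` is adjacent to `u ∈ B`, then
`u ∉ N(B)`, and `f v` lies in the same part as `f u` but differs from it. Neighbourhoods of distinct
points of `B` are disjoint, so `|N(B)| = dk`; hence each `B` carries at most `2^(N - dk)`
colourings, and there are at most `C(N, k)` choices of `B`. Finally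
`∑ₖ C(N, k) 2^(N - dk) = 2^N (1 + 2^(-d))^N < e · 2^N`, and there are six equipartitions.
-/

namespace SimpleGraph

variable {V : Type*} {G : SimpleGraph V} {B : Set V} {u v w : V}

theorem dist_le_two_of_adj_of_adj (huw : G.Adj u w) (hwv : G.Adj w v) : G.dist u v ≤ 2 :=
  dist_le (.cons huw (.cons hwv .nil))

theorem notMem_of_adj_of_pairwise_three_le_dist (hB : B.Pairwise fun u v => 3 ≤ G.dist u v)
    (hu : u ∈ B) (huv : G.Adj u v) : v ∉ B := fun hv => by
  have : 3 ≤ G.dist u v := hB hu hv huv.ne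
  rw [dist_eq_one_iff_adj.mpr huv] at this
  omega

theorem card_biUnion_neighborFinset_of_pairwise_three_le_dist [DecidableEq V] [G.LocallyFinite]
    {B : Finset V} (hB : (B : Set V).Pairwise fun u v => 3 ≤ G.dist u v) :
    #(B.biUnion fun u => G.neighborFinset u) = ∑ u ∈ B, G.degree u := by
  refine card_biUnion fun u hu u' hu' huu' => ?_
  refine Finset.disjoint_left.mpr fun w hw hw' => ?_
  have : 3 ≤ G.dist u u' := hB hu hu' huu'
  have := dist_le_two_of_adj_of_adj ((mem_neighborFinset ..).mp hw)
    ((mem_neighborFinset ..).mp hw').symm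
  omega

end SimpleGraph

theorem cube_adj_iff {d : ℕ} {u v : V d} :
    (cube d).Adj u v ↔ ∃ i, v = Function.update u i (!u i) := by
  change #{i | u i ≠ v i} = 1 ↔ _
  rw [card_eq_one]
  constructor
  · rintro ⟨i, hi⟩
    refine ⟨i, funext fun j => ?_⟩
    have hj := congrArg (j ∈ ·) hi
    simp only [mem_filter, mem_univ, true_and, mem_singleton, eq_iff_iff] at hj
    rcases eq_or_ne j i with rfl | hji
    · cases h : u j <;> cases h' : v j <;> simp_all
    · simpa [hji, eq_comm] using hj.not.mpr hji
  · rintro ⟨i, rfl⟩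
    refine ⟨i, ext fun j => ?_⟩
    rcases eq_or_ne j i with rfl | hji <;> simp [Function.update_of_ne, *]

theorem isEven_update_not {d : ℕ} (u : V d) (i : Fin d) :
    isEven (Function.update u i (!u i)) ↔ ¬ isEven u := by
  unfold isEven
  cases h : u i
  · have : univ.filter (fun j => Function.update u i true j = true) =
        insert i (univ.filter fun j => u j = true) := by
      ext j; rcases eq_or_ne j i with rfl | hji <;> simp [Function.update_of_ne, *]
    rw [Bool.not_false, this, card_insert_of_notMem (by simp [h]), Nat.even_add_one]
  · have : univ.filter (fun j => u j = true) =
        insert i (univ.filter fun j => Function.update u i false j = true) := by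
      ext j; rcases eq_or_ne j i with rfl | hji <;> simp [Function.update_of_ne, *]
    rw [Bool.not_true, this, card_insert_of_notMem (by simp), Nat.even_add_one, not_not]

theorem isEven_iff_not_of_adj {d : ℕ} {u v : V d} (h : (cube d).Adj u v) :
    isEven v ↔ ¬ isEven u := by
  obtain ⟨i, rfl⟩ := cube_adj_iff.mp h
  exact isEven_update_not u i

theorem cube_isRegularOfDegree (d : ℕ) : (cube d).IsRegularOfDegree d := fun u => by
  have : (cube d).neighborFinset u = univ.image fun i => Function.update u i (!u i) := by
    ext v; simp [cube_adj_iff, eq_comm]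
  rw [← SimpleGraph.card_neighborFinset_eq_degree, this, card_image_of_injective, card_univ,
    Fintype.card_fin]
  intro i j hij
  by_contra hne
  have := congrFun hij i
  simp [Function.update_of_ne hne] at this

theorem Finset.eq_of_mem_of_ne_of_card_eq_two {α : Type*} [DecidableEq α] {s : Finset α}
    (hs : #s = 2) {a b c : α} (ha : a ∈ s) (hb : b ∈ s) (hc : c ∈ s) (hac : a ≠ c) (hbc : b ≠ c) :
    a = b :=
  card_le_one.mp (by rw [card_erase_of_mem hc, hs]) a (mem_erase.mpr ⟨hac, ha⟩) b
    (mem_erase.mpr ⟨hbc, hb⟩)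

section Colorings

variable {d : ℕ} {C : Finset (Fin 4)} {B : Finset (V d)} {f g : V d → Fin 4} {u v : V d}

instance (v : V d) : Decidable (isEven v) := inferInstanceAs (Decidable (Even _))

def colorClass (C : Finset (Fin 4)) (B : Finset (V d)) (v : V d) : Finset (Fin 4) :=
  if (isEven v ↔ v ∉ B) then C else Cᶜ

theorem card_colorClass (hC : #C = 2) (v : V d) : #(colorClass C B v) = 2 := by
  unfold colorClass
  split_ifs <;> simp [card_compl, hC]

theorem mem_colorClass (hfB : badSet d f C = B) (v : V d) : f v ∈ colorClass C B v := by
  have : v ∈ B ↔ ¬ (f v ∈ C ↔ isEven v) := by rw [← mem_coe, ← hfB]; rfl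
  unfold colorClass
  split_ifs
  · tauto
  · exact mem_compl.mpr (by tauto)

theorem colorClass_eq_of_adj (hu : u ∈ B) (hv : v ∉ B) (huv : (cube d).Adj u v) :
    colorClass C B u = colorClass C B v := by
  simp [colorClass, hu, hv, isEven_iff_not_of_adj huv]

def nbhd (B : Finset (V d)) : Finset (V d) := B.biUnion fun u => (cube d).neighborFinset u

theorem card_compl_nbhd_add (hB : (B : Set (V d)).Pairwise fun u v => 3 ≤ (cube d).dist u v) :
    #(nbhd B)ᶜ + d * #B = 2 ^ d := by
  have hcard : #(nbhd B) = d * #B := by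
    rw [nbhd, SimpleGraph.card_biUnion_neighborFinset_of_pairwise_three_le_dist hB,
      sum_congr rfl fun u _ => cube_isRegularOfDegree d u, sum_const, smul_eq_mul, mul_comm]
  rw [card_compl, ← hcard, Nat.sub_add_cancel (card_le_univ _)]
  simp

theorem eq_of_eqOn_compl_nbhd (hC : #C = 2)
    (hB : (B : Set (V d)).Pairwise fun u v => 3 ≤ (cube d).dist u v)
    (hf : IsColoring d 4 f) (hg : IsColoring d 4 g) (hfB : badSet d f C = B)
    (hgB : badSet d g C = B) (hfg : ∀ v ∉ nbhd B, f v = g v) : f = g := by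
  funext v
  by_cases hv : v ∉ nbhd B
  · exact hfg v hv
  obtain ⟨u, hu, huv⟩ := mem_biUnion.mp (not_not.mp hv)
  rw [SimpleGraph.mem_neighborFinset] at huv
  have hvB : v ∉ B := SimpleGraph.notMem_of_adj_of_pairwise_three_le_dist hB hu huv
  have hu_nbhd : u ∉ nbhd B := fun h => by
    obtain ⟨w, hw, hwu⟩ := mem_biUnion.mp h
    exact SimpleGraph.notMem_of_adj_of_pairwise_three_le_dist hB hw
      ((SimpleGraph.mem_neighborFinset ..).mp hwu) hu
  have hfu : f u ∈ colorClass C B v := colorClass_eq_of_adj hu hvB huv ▸ mem_colorClass hfB u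
  -- `f v` and `g v` lie in the two-element class of `v` and both avoid `f u = g u`.
  exact eq_of_mem_of_ne_of_card_eq_two (card_colorClass hC v) (mem_colorClass hfB v)
    (mem_colorClass hgB v) hfu (hf u v huv).symm (hfg u hu_nbhd ▸ (hg u v huv).symm)

theorem card_le_of_forall_badSet_eq (hC : #C = 2)
    (hB : (B : Set (V d)).Pairwise fun u v => 3 ≤ (cube d).dist u v) {s : Finset (V d → Fin 4)}
    (hs : ∀ f ∈ s, IsColoring d 4 f ∧ badSet d f C = B) :
    #s ≤ 2 ^ #(nbhd B)ᶜ := by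
  classical
  calc #s ≤ #(Fintype.piFinset fun v : ↥(nbhd B)ᶜ => colorClass C B v.1) := by
        refine card_le_card_of_injOn (fun f v => f v)
          (fun f hf => Fintype.mem_piFinset.mpr fun v => mem_colorClass (hs f hf).2 v) ?_
        intro f hf g hg hfg
        exact eq_of_eqOn_compl_nbhd hC hB (hs f hf).1 (hs g hg).1 (hs f hf).2 (hs g hg).2
          fun v hv => congrFun hfg ⟨v, mem_compl.mpr hv⟩
    _ = 2 ^ #(nbhd B)ᶜ := by simp [card_colorClass hC]

end Colorings

theorem idealCount_le {d : ℕ} {C : Finset (Fin 4)} (hC : #C = 2) (k : ℕ) :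
    (idealCount d C k : ℝ) ≤ ((2 ^ d).choose k : ℝ) * (2 : ℝ) ^ ((2 : ℝ) ^ d - (d : ℝ) * k) := by
  classical
  set F : Finset (V d → Fin 4) := {f | IsColoring d 4 f ∧ (badSet d f C).ncard = k ∧
    (badSet d f C).Pairwise fun u v => 3 ≤ (cube d).dist u v}
  set S : Finset (Finset (V d)) :=
    {B ∈ powersetCard k univ | (B : Set (V d)).Pairwise fun u v => 3 ≤ (cube d).dist u v}
  let bad (f : V d → Fin 4) : Finset (V d) := {v | v ∈ badSet d f C}
  have hbad (f : V d → Fin 4) : (bad f : Set (V d)) = badSet d f C := coe_filter_univ _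
  have hmaps : (F : Set (V d → Fin 4)).MapsTo bad S := fun f hf => by
    obtain ⟨-, hk, hsep⟩ := (mem_filter.mp hf).2
    refine mem_filter.mpr ⟨mem_powersetCard_univ.mpr ?_, hbad f ▸ hsep⟩
    rw [← hk, ← hbad, Set.ncard_coe_finset]
  have hfiber : ∀ B ∈ S, (#{f ∈ F | bad f = B} : ℝ) ≤ (2 : ℝ) ^ ((2 : ℝ) ^ d - (d : ℝ) * k) := by
    intro B hB
    obtain ⟨hBk, hsep⟩ := mem_filter.mp hB
    have hcard : ((#(nbhd B)ᶜ : ℕ) : ℝ) + d * k = 2 ^ d := by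
      rw [← (mem_powersetCard_univ.mp hBk)]; exact_mod_cast card_compl_nbhd_add hsep
    rw [← eq_sub_of_add_eq hcard, Real.rpow_natCast]
    exact_mod_cast card_le_of_forall_badSet_eq hC hsep fun f hf => by
      obtain ⟨hfF, rfl⟩ := mem_filter.mp hf
      exact ⟨(mem_filter.mp hfF).2.1, (hbad f).symm⟩
  calc (idealCount d C k : ℝ) = #F := by
        rw [idealCount, Nat.card_eq_fintype_card, Fintype.card_subtype]
    _ = ∑ B ∈ S, (#{f ∈ F | bad f = B} : ℝ) := by
        rw [card_eq_sum_card_fiberwise hmaps, Nat.cast_sum]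
    _ ≤ ∑ _B ∈ S, (2 : ℝ) ^ ((2 : ℝ) ^ d - (d : ℝ) * k) := sum_le_sum hfiber
    _ = #S * (2 : ℝ) ^ ((2 : ℝ) ^ d - (d : ℝ) * k) := by rw [sum_const, nsmul_eq_mul]
    _ ≤ ((2 ^ d : ℕ).choose k : ℝ) * (2 : ℝ) ^ ((2 : ℝ) ^ d - (d : ℝ) * k) := by
        gcongr
        exact (card_filter_le _ _).trans_eq (by simp)

theorem two_rpow_two_pow_sub_mul (d k : ℕ) :
    (2 : ℝ) ^ ((2 : ℝ) ^ d - (d : ℝ) * k) = 2 ^ 2 ^ d * (((2 ^ d : ℕ) : ℝ)⁻¹) ^ k := by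
  have h₁ : (2 : ℝ) ^ ((2 : ℝ) ^ d) = 2 ^ 2 ^ d := by exact_mod_cast Real.rpow_natCast 2 (2 ^ d)
  have h₂ : (2 : ℝ) ^ ((d : ℝ) * k) = (2 ^ d) ^ k := by
    rw [← pow_mul]; exact_mod_cast Real.rpow_natCast 2 (d * k)
  rw [Real.rpow_sub two_pos, h₁, h₂, div_eq_mul_inv, inv_pow]
  push_cast
  rfl

theorem one_add_inv_pow_lt_exp_one {n : ℕ} (hn : n ≠ 0) : (1 + (n : ℝ)⁻¹) ^ n < Real.exp 1 :=
  calc (1 + (n : ℝ)⁻¹) ^ n < Real.exp (n : ℝ)⁻¹ ^ n := by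
        gcongr
        rw [add_comm]
        exact Real.add_one_lt_exp (by positivity)
    _ = Real.exp 1 := by rw [← Real.exp_nat_mul, mul_inv_cancel₀ (by positivity)]

theorem tsum_idealCount_lt {d : ℕ} {C : Finset (Fin 4)} (hC : #C = 2) :
    ∑' k, (idealCount d C k : ℝ) < Real.exp 1 * 2 ^ 2 ^ d := by
  set N := 2 ^ d
  have hbound (k : ℕ) :
      (idealCount d C k : ℝ) ≤ 2 ^ N * ((N : ℝ)⁻¹ ^ k * 1 ^ (N - k) * N.choose k) := by
    convert idealCount_le hC k using 1
    rw [two_rpow_two_pow_sub_mul]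
    ring
  have hvanish : ∀ k ∉ range (N + 1), (idealCount d C k : ℝ) = 0 := fun k hk =>
    le_antisymm (by simpa [Nat.choose_eq_zero_of_lt (by simpa using hk)] using hbound k)
      (Nat.cast_nonneg _)
  calc ∑' k, (idealCount d C k : ℝ) = ∑ k ∈ range (N + 1), (idealCount d C k : ℝ) :=
        tsum_eq_sum hvanish
    _ ≤ 2 ^ N * ((N : ℝ)⁻¹ + 1) ^ N := by
        rw [add_pow, mul_sum]
        exact sum_le_sum fun k _ => hbound k
    _ < 2 ^ N * Real.exp 1 := by
        rw [add_comm]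
        gcongr
        exact one_add_inv_pow_lt_exp_one (by positivity)
    _ = Real.exp 1 * 2 ^ N := mul_comm _ _

theorem isEquip_iff {C D : Finset (Fin 4)} : IsEquip C D ↔ #C = 2 ∧ D = Cᶜ := by
  constructor
  · rintro ⟨hC, hD, hdisj, -⟩
    refine ⟨hC, eq_of_subset_of_card_le (fun x hx => mem_compl.mpr ?_) ?_⟩
    · exact disjoint_left.mp hdisj.symm hx
    · simp [card_compl, hC, hD]
  · rintro ⟨hC, rfl⟩
    exact ⟨hC, by simp [card_compl, hC], disjoint_compl_right, union_compl C⟩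

open scoped Classical in
/-- For each ordered equipartition `(C,D)` and each `k`, the number of proper 4-colorings
with exactly `k` pairwise-distance-`≥ 3` bad vertices is at most `C(N,k) 2^{N-dk}`;
summing over the six equipartitions and all `k` gives less than `6e·2^N`. -/
theorem ideal_colorings_count (d : ℕ) :
    (∀ C D : Finset (Fin 4), IsEquip C D → ∀ k : ℕ,
      (idealCount d C k : ℝ) ≤
        ((2 ^ d).choose k : ℝ) * (2 : ℝ) ^ ((2 : ℝ) ^ d - (d : ℝ) * k))
    ∧ (∑ C : Finset (Fin 4), ∑ D : Finset (Fin 4),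
        if IsEquip C D then ∑' k : ℕ, (idealCount d C k : ℝ) else 0) <
      6 * Real.exp 1 * (2 : ℝ) ^ (2 ^ d : ℕ) := by
  refine ⟨fun C D hCD k => idealCount_le (isEquip_iff.mp hCD).1 k, ?_⟩
  have hsum_D (C : Finset (Fin 4)) :
      (∑ D : Finset (Fin 4), if IsEquip C D then ∑' k, (idealCount d C k : ℝ) else 0) =
        if #C = 2 then ∑' k, (idealCount d C k : ℝ) else 0 := by
    by_cases hC : #C = 2 <;> simp [isEquip_iff, hC]
  calc _ = ∑ C ∈ powersetCard 2 univ, ∑' k, (idealCount d C k : ℝ) := by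
        simp_rw [hsum_D, powersetCard_eq_filter, powerset_univ, sum_filter]
    _ < ∑ _C ∈ powersetCard 2 (univ : Finset (Fin 4)), Real.exp 1 * 2 ^ 2 ^ d :=
        sum_lt_sum_of_nonempty (powersetCard_nonempty.mpr (by simp))
          fun C hC => tsum_idealCount_lt (mem_powersetCard_univ.mp hC)
    _ = 6 * Real.exp 1 * 2 ^ 2 ^ d := by simp [mul_assoc, Nat.choose]
end
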